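/- arXiv:1403.3708 — 4 statements merged into one kernel-verified Lean document; each statement's English description precedes it below -/
import Mathlib

section
/- For 0 < γ < 1 and y < t_c < t, the integral W(y, t, t_c) := ∫_{t_c}^{t} (τ−y)^{γ}(t−τ)^{−γ} dτ equals γπ·csc(πγ)·(t−y) − (1/(1+γ))·(t_c−y)^{1+γ}·(t−y)^{−γ} · ₂F₁(1+γ, γ; 2+γ; (t_c−y)/(t−y)). -/
/-!
The substitution `τ = y + (t - y) v` turns `W` into `(t - y) ∫_z^1 v^γ (1 - v)^(-γ) dv` with
`z = (t_c - y) / (t - y)`. Over `[0, 1]` this is the Beta integral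
`B(1 + γ, 1 - γ) = Γ(1 + γ) Γ(1 - γ) = γ π / sin (π γ)` (reflection formula). Over `[0, z]`,
integrating the binomial series `(1 - v)^(-γ) = ∑ (γ)ₙ vⁿ / n!` term by term (dominated by the
absolutely convergent series at `z < 1`) gives `z^(1 + γ) / (1 + γ) · ₂F₁(1 + γ, γ; 2 + γ; z)`,
because `(1 + γ)ₙ / (2 + γ)ₙ = (1 + γ) / (1 + γ + n)`.
-/

open MeasureTheory Set Real Filter

/-- The Gauss hypergeometric function `₂F₁(a, b; c; z)` as a power series sum. -/
noncomputable def hyp2F1 (a b c z : ℝ) : ℝ :=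
  ∑' n : ℕ, ((ascPochhammer ℝ n).eval a * (ascPochhammer ℝ n).eval b /
    (ascPochhammer ℝ n).eval c) * z ^ n / (n.factorial : ℝ)

open scoped Nat

theorem Ring.choose_add_natCast_sub_one_eq_ascPochhammer_div {K : Type*} [Field K] [CharZero K]
    (a : K) (n : ℕ) : Ring.choose (a + n - 1) n = (ascPochhammer K n).eval a / n ! := by
  rw [← Ring.multichoose_eq, eq_div_iff (Nat.cast_ne_zero.2 n.factorial_ne_zero), mul_comm,
    ← nsmul_eq_mul, Ring.factorial_nsmul_multichoose_eq_ascPochhammer,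
    Polynomial.ascPochhammer_smeval_eq_eval]

theorem ascPochhammer_eval_mul_add_natCast {S : Type*} [CommSemiring S] (n : ℕ) (c : S) :
    (ascPochhammer S n).eval c * (c + n) = c * (ascPochhammer S n).eval (c + 1) := by
  rw [← ascPochhammer_succ_eval, ascPochhammer_succ_left]
  simp

theorem mem_eball_zero_one_of_abs_lt_one {x : ℝ} (hx : |x| < 1) :
    x ∈ Metric.eball (0 : ℝ) 1 := by
  rw [Metric.mem_eball, edist_zero_right, enorm_eq_nnnorm]
  exact_mod_cast hx

theorem hasSum_ascPochhammer_div_factorial_mul_pow (a : ℝ) {x : ℝ} (hx : |x| < 1) :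
    HasSum (fun n : ℕ => (ascPochhammer ℝ n).eval a / n ! * x ^ n) ((1 - x) ^ (-a)) := by
  have h := (one_div_one_sub_rpow_hasFPowerSeriesOnBall_zero a).hasSum
    (mem_eball_zero_one_of_abs_lt_one hx)
  simpa [FormalMultilinearSeries.ofScalars_apply_eq, mul_comm,
    Ring.choose_add_natCast_sub_one_eq_ascPochhammer_div,
    rpow_neg (by linarith [abs_lt.mp hx] : 0 ≤ 1 - x)] using h

theorem summable_abs_ascPochhammer_div_factorial_mul_pow (a : ℝ) {x : ℝ} (hx : |x| < 1) :
    Summable (fun n : ℕ => |(ascPochhammer ℝ n).eval a / n !| * |x| ^ n) := by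
  have hF := one_div_one_sub_rpow_hasFPowerSeriesOnBall_zero a
  simpa [FormalMultilinearSeries.ofScalars_apply_eq, mul_comm, abs_div,
    Ring.choose_add_natCast_sub_one_eq_ascPochhammer_div] using
    FormalMultilinearSeries.summable_norm_apply _
      (Metric.eball_subset_eball hF.r_le (mem_eball_zero_one_of_abs_lt_one hx))

theorem hasSum_integral_rpow_mul_one_sub_rpow_neg (a : ℝ) {b z : ℝ} (hb : -1 < b)
    (hz0 : 0 ≤ z) (hz1 : z < 1) :
    HasSum (fun n : ℕ => (ascPochhammer ℝ n).eval a / n ! * (z ^ (n + b + 1) / (n + b + 1)))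
      (∫ u in 0..z, u ^ b * (1 - u) ^ (-a)) := by
  set c : ℕ → ℝ := fun n => (ascPochhammer ℝ n).eval a / (n ! : ℝ)
  have hzabs : |z| < 1 := by rwa [abs_of_nonneg hz0]
  have hmem {u : ℝ} (hu : u ∈ uIoc 0 z) : 0 < u ∧ u ≤ z := by
    rwa [uIoc_of_le hz0] at hu
  have hterm (n : ℕ) :
      ∫ u in 0..z, c n * u ^ ((n : ℝ) + b) = c n * (z ^ (n + b + 1) / (n + b + 1)) := by
    have hnb : 0 < (n : ℝ) + b + 1 := by linarith [(Nat.cast_nonneg n : (0 : ℝ) ≤ n)]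
    rw [intervalIntegral.integral_const_mul, integral_rpow (Or.inl (by linarith)),
      zero_rpow hnb.ne', sub_zero]
  suffices key : HasSum (fun n : ℕ => ∫ u in 0..z, c n * u ^ ((n : ℝ) + b))
      (∫ u in 0..z, u ^ b * (1 - u) ^ (-a)) by
    simpa only [hterm] using key
  refine intervalIntegral.hasSum_integral_of_dominated_convergence
    (fun n u => |c n| * z ^ n * u ^ b) (fun n => by fun_prop) (fun n => ?_) ?_ ?_ ?_
  · refine Eventually.of_forall fun u hu => ?_
    obtain ⟨hu0, huz⟩ := hmem hu
    rw [rpow_add hu0, rpow_natCast, norm_mul, norm_mul, Real.norm_eq_abs, mul_assoc,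
      norm_of_nonneg (by positivity), norm_of_nonneg (by positivity)]
    gcongr
  · refine Eventually.of_forall fun u _ => ?_
    simpa [abs_of_nonneg hz0] using
      (summable_abs_ascPochhammer_div_factorial_mul_pow a hzabs).mul_right (u ^ b)
  · simp_rw [tsum_mul_right]
    exact (intervalIntegral.intervalIntegrable_rpow' hb).const_mul _
  · refine Eventually.of_forall fun u hu => ?_
    obtain ⟨hu0, huz⟩ := hmem hu
    have hu1 : |u| < 1 := by rw [abs_of_pos hu0]; linarith
    have h := (hasSum_ascPochhammer_div_factorial_mul_pow a hu1).mul_left (u ^ b)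
    have hfun : (fun n : ℕ => u ^ b * (c n * u ^ n)) = fun n => c n * u ^ ((n : ℝ) + b) := by
      ext n
      rw [rpow_add hu0, rpow_natCast]
      ring
    rwa [hfun] at h

theorem integral_rpow_mul_one_sub_rpow_neg_eq_hyp2F1 (a : ℝ) {b z : ℝ} (hb : -1 < b)
    (hz0 : 0 ≤ z) (hz1 : z < 1) :
    ∫ u in 0..z, u ^ b * (1 - u) ^ (-a) = z ^ (b + 1) / (b + 1) * hyp2F1 (b + 1) a (b + 2) z := by
  rw [hyp2F1, ← tsum_mul_left,
    ← (hasSum_integral_rpow_mul_one_sub_rpow_neg a hb hz0 hz1).tsum_eq]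
  refine tsum_congr fun n => ?_
  have hnb : 0 < (n : ℝ) + b + 1 := by linarith [(Nat.cast_nonneg n : (0 : ℝ) ≤ n)]
  have hpoch := ascPochhammer_eval_mul_add_natCast n (b + 1)
  rw [show b + 1 + 1 = b + 2 by ring] at hpoch
  have hpow : z ^ ((n : ℝ) + b + 1) = z ^ (n : ℝ) * z ^ (b + 1) := by
    rw [add_assoc, rpow_add' hz0 (by linarith)]
  have hb1 : b + 1 ≠ 0 := by linarith
  have hpos : 0 < (ascPochhammer ℝ n).eval (b + 2) := ascPochhammer_pos n _ (by linarith)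
  rw [hpow, rpow_natCast]
  field_simp
  linear_combination -(z ^ n * z ^ (b + 1) * (ascPochhammer ℝ n).eval a) * hpoch

theorem Complex.cpow_sub_one_mul_one_sub_cpow_sub_one {u : ℝ} (hu : u ∈ Icc (0 : ℝ) 1)
    (p q : ℝ) :
    (u : ℂ) ^ ((p : ℂ) - 1) * (1 - (u : ℂ)) ^ ((q : ℂ) - 1)
      = ((u ^ (p - 1) * (1 - u) ^ (q - 1) : ℝ) : ℂ) := by
  rw [Complex.ofReal_mul, Complex.ofReal_cpow hu.1, Complex.ofReal_cpow (sub_nonneg.2 hu.2)]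
  push_cast
  rfl

theorem intervalIntegrable_rpow_mul_one_sub_rpow {p q : ℝ} (hp : 0 < p) (hq : 0 < q) :
    IntervalIntegrable (fun u : ℝ => u ^ (p - 1) * (1 - u) ^ (q - 1)) volume 0 1 := by
  have h := intervalIntegrable_iff.mp (Complex.betaIntegral_convergent (u := p) (v := q)
    (by simpa using hp) (by simpa using hq))
  refine intervalIntegrable_iff.mpr
    (IntegrableOn.congr_fun h.re (fun u hu => ?_) measurableSet_uIoc)
  rw [uIoc_of_le zero_le_one] at hu
  rw [Complex.cpow_sub_one_mul_one_sub_cpow_sub_one (Ioc_subset_Icc_self hu)]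
  rfl

theorem integral_rpow_mul_one_sub_rpow {p q : ℝ} (hp : 0 < p) (hq : 0 < q) :
    ∫ u in 0..1, u ^ (p - 1) * (1 - u) ^ (q - 1) = Gamma p * Gamma q / Gamma (p + q) := by
  have h := Complex.betaIntegral_eq_Gamma_mul_div p q (by simpa using hp) (by simpa using hq)
  have hreal :
      Complex.betaIntegral p q = ↑(∫ u in (0 : ℝ)..1, u ^ (p - 1) * (1 - u) ^ (q - 1)) := by
    rw [Complex.betaIntegral, ← intervalIntegral.integral_ofReal]
    refine intervalIntegral.integral_congr fun u hu => ?_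
    rw [uIcc_of_le zero_le_one] at hu
    exact Complex.cpow_sub_one_mul_one_sub_cpow_sub_one hu p q
  rw [hreal, ← Complex.ofReal_add, Complex.Gamma_ofReal, Complex.Gamma_ofReal,
    Complex.Gamma_ofReal] at h
  exact_mod_cast h

theorem integral_rpow_mul_one_sub_rpow_neg {γ : ℝ} (hγ : γ ∈ Ioo (0 : ℝ) 1) :
    ∫ u in 0..1, u ^ γ * (1 - u) ^ (-γ) = γ * π / sin (π * γ) := by
  have h := integral_rpow_mul_one_sub_rpow (p := 1 + γ) (q := 1 - γ) (by linarith [hγ.1])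
    (by linarith [hγ.2])
  rw [add_sub_cancel_left, sub_sub_cancel_left, add_add_sub_cancel, one_add_one_eq_two,
    Gamma_two, div_one, add_comm, Gamma_add_one hγ.1.ne', mul_assoc, Gamma_mul_Gamma_one_sub] at h
  rw [h, mul_div_assoc]

theorem integral_sub_rpow_mul_sub_rpow_neg (γ : ℝ) {y s t : ℝ} (hys : y ≤ s) (hst : s ≤ t)
    (hyt : y < t) :
    ∫ τ in s..t, (τ - y) ^ γ * (t - τ) ^ (-γ)
      = (t - y) * ∫ v in (s - y) / (t - y)..1, v ^ γ * (1 - v) ^ (-γ) := by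
  have hL : 0 < t - y := sub_pos.2 hyt
  have hz0 : 0 ≤ (s - y) / (t - y) := div_nonneg (sub_nonneg.2 hys) hL.le
  have hz1 : (s - y) / (t - y) ≤ 1 := (div_le_one hL).2 (by linarith)
  have hsub := intervalIntegral.integral_comp_add_mul (a := (s - y) / (t - y)) (b := 1)
    (fun τ => (τ - y) ^ γ * (t - τ) ^ (-γ)) hL.ne' y
  rw [mul_div_cancel₀ _ hL.ne', mul_one, add_sub_cancel, add_sub_cancel, smul_eq_mul,
    eq_inv_mul_iff_mul_eq₀ hL.ne'] at hsub
  rw [← hsub]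
  congr 1
  refine intervalIntegral.integral_congr fun v hv => ?_
  rw [uIcc_of_le hz1] at hv
  have hv0 : 0 ≤ v := hz0.trans hv.1
  have hv1 : 0 ≤ 1 - v := sub_nonneg.2 hv.2
  rw [add_sub_cancel_left, show t - (y + (t - y) * v) = (t - y) * (1 - v) by ring,
    mul_rpow hL.le hv0, mul_rpow hL.le hv1, rpow_neg hL.le, rpow_neg hv1]
  field_simp

/-- Closed form of `W(y, t, t_c) = ∫_{t_c}^t (τ - y)^γ (t - τ)^(-γ) dτ` for `y < t_c < t`. -/
theorem W_closed_form (γ y t_c t : ℝ) (hγ : γ ∈ Set.Ioo (0:ℝ) 1)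
    (hy : y < t_c) (ht : t_c < t) :
    (∫ τ in t_c..t, (τ - y) ^ γ * (t - τ) ^ (-γ))
      = γ * π * (Real.sin (π * γ))⁻¹ * (t - y)
        - (1 / (1 + γ)) * (t_c - y) ^ (1 + γ) * (t - y) ^ (-γ) *
          hyp2F1 (1 + γ) γ (2 + γ) ((t_c - y) / (t - y)) := by
  obtain ⟨hγ0, hγ1⟩ := hγ
  have hL : 0 < t - y := by linarith
  set z := (t_c - y) / (t - y)
  have hz0 : 0 < z := div_pos (by linarith) hL
  have hz1 : z < 1 := (div_lt_one hL).2 (by linarith)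
  have hint : IntervalIntegrable (fun u : ℝ => u ^ γ * (1 - u) ^ (-γ)) volume 0 1 := by
    simpa using intervalIntegrable_rpow_mul_one_sub_rpow (p := 1 + γ) (q := 1 - γ)
      (by linarith) (by linarith)
  have hint_z : IntervalIntegrable (fun u : ℝ => u ^ γ * (1 - u) ^ (-γ)) volume 0 z :=
    hint.mono_set (uIcc_subset_uIcc left_mem_uIcc (mem_uIcc_of_le hz0.le hz1.le))
  have hscale : (t_c - y) ^ (1 + γ) * (t - y) ^ (-γ) = (t - y) * z ^ (1 + γ) := by
    rw [← mul_div_cancel₀ (t_c - y) hL.ne', mul_rpow hL.le hz0.le, rpow_add hL, rpow_one,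
      rpow_neg hL.le]
    field_simp
  rw [integral_sub_rpow_mul_sub_rpow_neg γ hy.le ht.le (hy.trans ht),
    ← intervalIntegral.integral_interval_sub_left hint hint_z,
    integral_rpow_mul_one_sub_rpow_neg ⟨hγ0, hγ1⟩,
    integral_rpow_mul_one_sub_rpow_neg_eq_hyp2F1 γ (by linarith) hz0.le hz1,
    add_comm γ 1, add_comm γ 2]
  linear_combination hyp2F1 (1 + γ) γ (2 + γ) z / (1 + γ) * hscale
end

section
/- Let 0 < γ < 1 and let s : [0, t_c] → ℝ be continuous with ∫₀^{t_c} s(τ)(t_c−τ)^{γ−1} dτ = 1/γ (so f(t_c) = 0 where f(t) := 1/γ − ∫₀^{t_c} s(τ)(t−τ)^{γ−1} dτ). If s is piecewise linear on a partition 0 = t₀ < t₁ < ... < t_k = t_c, then the solution g of the Abel equation ∫_{t_c}^{t} g(τ)(t−τ)^{γ−1} dτ = f(t) given by the inversion formula satisfies lim_{t→t_c⁺} g(t) = s(t_c). -/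
/-!
On each linear piece the potential `∫ s(τ) (t - τ)^(γ-1) dτ` has an explicit primitive, so for
`t > t_c` its derivative telescopes to `s(0) t^(γ-1) - s(t_c) (t - t_c)^(γ-1)` plus a function
continuous in `t`. Hence `f' = s(t_c) (u - t_c)^(γ-1) + H` with `H` bounded near `t_c`. The Abel
transform of the singular term is exactly `s(t_c)`, by `B(γ, 1 - γ) = π / sin (π γ)`, while that
of `H` is `O((τ - t_c)^(1-γ))`.
-/

open MeasureTheory Set Real Filter Topology

theorem integral_sub_rpow_mul_sub_rpow_neg_s11 {γ c b : ℝ} (hγ0 : 0 < γ) (hγ1 : γ < 1) (hcb : c < b) :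
    ∫ u in c..b, (u - c) ^ (γ - 1) * (b - u) ^ (-γ) = π / sin (π * γ) := by
  have hpos : 0 < b - c := sub_pos.mpr hcb
  have hshift := intervalIntegral.integral_comp_sub_right
    (fun x => x ^ (γ - 1) * ((b - c) - x) ^ (-γ)) (a := c) (b := b) c
  simp only [sub_sub_sub_cancel_right, sub_self] at hshift
  rw [hshift]
  apply Complex.ofReal_injective
  rw [← intervalIntegral.integral_ofReal]
  have hbeta := Complex.betaIntegral_scaled γ (1 - γ) hpos
  rw [Complex.betaIntegral_eq_Gamma_mul_div _ _ (by simpa using hγ0) (by simpa using hγ1),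
    Complex.Gamma_mul_Gamma_one_sub] at hbeta
  simp only [add_sub_cancel, sub_self, Complex.cpow_zero, one_mul, Complex.Gamma_one, div_one]
    at hbeta
  push_cast
  rw [← hbeta]
  refine intervalIntegral.integral_congr fun x hx => ?_
  rw [uIcc_of_le hpos.le] at hx
  rw [Complex.ofReal_cpow hx.1, Complex.ofReal_cpow (sub_nonneg.mpr hx.2)]
  push_cast
  ring_nf

theorem intervalIntegrable_sub_rpow_neg {γ c b : ℝ} (hγ1 : γ < 1) :
    IntervalIntegrable (fun u => (b - u) ^ (-γ)) volume c b := by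
  simpa using (intervalIntegral.intervalIntegrable_rpow' (r := -γ) (by linarith)
    (a := b - c) (b := 0)).comp_sub_left b

theorem integral_sub_rpow_neg {γ c b : ℝ} (hγ1 : γ < 1) :
    ∫ u in c..b, (b - u) ^ (-γ) = (b - c) ^ (1 - γ) / (1 - γ) := by
  rw [intervalIntegral.integral_comp_sub_left (fun x => x ^ (-γ)) b, sub_self,
    integral_rpow (Or.inl (by linarith)), zero_rpow (by linarith : -γ + 1 ≠ 0), sub_zero,
    neg_add_eq_sub]

theorem tendsto_integral_mul_sub_rpow_neg {γ c d : ℝ} (hγ1 : γ < 1) (hcd : c < d) {H : ℝ → ℝ}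
    (hH : ContinuousOn H (Icc c d)) :
    Tendsto (fun b => ∫ u in c..b, H u * (b - u) ^ (-γ)) (𝓝[>] c) (𝓝 0) := by
  obtain ⟨M, hM⟩ := isCompact_Icc.exists_bound_of_continuousOn hH
  have hbound : ∀ b ∈ Ioo c d,
      ‖∫ u in c..b, H u * (b - u) ^ (-γ)‖ ≤ M * ((b - c) ^ (1 - γ) / (1 - γ)) := by
    intro b ⟨hcb, hbd⟩
    calc ‖∫ u in c..b, H u * (b - u) ^ (-γ)‖ ≤ ∫ u in c..b, M * (b - u) ^ (-γ) := by
          refine intervalIntegral.norm_integral_le_of_norm_le hcb.le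
            (ae_of_all _ fun u hu => ?_) ((intervalIntegrable_sub_rpow_neg hγ1).const_mul M)
          have hw : 0 ≤ (b - u) ^ (-γ) := rpow_nonneg (by linarith [hu.2]) _
          rw [norm_mul, Real.norm_of_nonneg hw]
          exact mul_le_mul_of_nonneg_right (hM u ⟨hu.1.le, by linarith [hu.2]⟩) hw
      _ = M * ((b - c) ^ (1 - γ) / (1 - γ)) := by
          rw [intervalIntegral.integral_const_mul, integral_sub_rpow_neg hγ1]
  have hlim : Tendsto (fun b => M * ((b - c) ^ (1 - γ) / (1 - γ))) (𝓝[>] c) (𝓝 0) := by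
    have hcont : ContinuousAt (fun b => M * ((b - c) ^ (1 - γ) / (1 - γ))) c := by
      fun_prop (disch := right; linarith)
    simpa [zero_rpow (by linarith : 1 - γ ≠ 0)] using hcont.tendsto.mono_left nhdsWithin_le_nhds
  refine squeeze_zero_norm' ?_ hlim
  filter_upwards [Ioo_mem_nhdsGT hcd] with b hb using hbound b hb

theorem tendsto_abel_inversion {γ c d a : ℝ} (hγ0 : 0 < γ) (hγ1 : γ < 1) (hcd : c < d)
    {φ H : ℝ → ℝ} (hH : ContinuousOn H (Icc c d))
    (hφ : ∀ u ∈ Ioo c d, φ u = a * (u - c) ^ (γ - 1) + H u) :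
    Tendsto (fun b => sin (π * γ) / π * ∫ u in c..b, φ u * (b - u) ^ (-γ)) (𝓝[>] c) (𝓝 a) := by
  have hsin : sin (π * γ) ≠ 0 :=
    (sin_pos_of_pos_of_lt_pi (by positivity) (by nlinarith [pi_pos])).ne'
  have hsplit : ∀ b ∈ Ioo c d, sin (π * γ) / π * ∫ u in c..b, φ u * (b - u) ^ (-γ)
      = a + sin (π * γ) / π * ∫ u in c..b, H u * (b - u) ^ (-γ) := by
    intro b ⟨hcb, hbd⟩
    have hkernel := integral_sub_rpow_mul_sub_rpow_neg_s11 hγ0 hγ1 hcb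
    have hkernel_int :
        IntervalIntegrable (fun u => (u - c) ^ (γ - 1) * (b - u) ^ (-γ)) volume c b :=
      intervalIntegral.intervalIntegrable_of_integral_ne_zero
        (by rw [hkernel]; exact div_ne_zero pi_ne_zero hsin)
    have hH_int : IntervalIntegrable (fun u => H u * (b - u) ^ (-γ)) volume c b :=
      (intervalIntegrable_sub_rpow_neg hγ1).continuousOn_mul
        (hH.mono (by rw [uIcc_of_le hcb.le]; exact Icc_subset_Icc_right hbd.le))
    have hφ_ae : ∀ᵐ u, u ∈ uIoc c b → φ u * (b - u) ^ (-γ)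
        = a * ((u - c) ^ (γ - 1) * (b - u) ^ (-γ)) + H u * (b - u) ^ (-γ) := by
      refine ae_of_all _ fun u hu => ?_
      rw [uIoc_of_le hcb.le] at hu
      rw [hφ u ⟨hu.1, hu.2.trans_lt hbd⟩]
      ring
    rw [intervalIntegral.integral_congr_ae hφ_ae, intervalIntegral.integral_add
      (hkernel_int.const_mul a) hH_int, intervalIntegral.integral_const_mul, hkernel]
    field_simp
  have hlim := ((tendsto_integral_mul_sub_rpow_neg hγ1 hcd hH).const_mul
    (sin (π * γ) / π)).const_add a
  rw [mul_zero, add_zero] at hlim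
  refine hlim.congr' ?_
  filter_upwards [Ioo_mem_nhdsGT hcd] with b hb using (hsplit b hb).symm

noncomputable def affineKernelPrimitive (γ A B t c : ℝ) : ℝ :=
  -(A * t + B) * (t - c) ^ γ / γ + A * (t - c) ^ (γ + 1) / (γ + 1)

theorem hasDerivAt_affineKernelPrimitive_endpoint {γ A B t c : ℝ} (hγ : 0 < γ) (hct : c < t) :
    HasDerivAt (affineKernelPrimitive γ A B t) ((A * c + B) * (t - c) ^ (γ - 1)) c := by
  have hpos : 0 < t - c := sub_pos.mpr hct
  have hsub : HasDerivAt (fun c => t - c) (-1) c := by simpa using (hasDerivAt_id c).const_sub t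
  have h1 := (hasDerivAt_rpow_const (p := γ) (Or.inl hpos.ne')).comp c hsub
  have h2 := (hasDerivAt_rpow_const (p := γ + 1) (Or.inl hpos.ne')).comp c hsub
  refine (((h1.const_mul (-(A * t + B))).div_const γ).add
    ((h2.const_mul A).div_const (γ + 1))).congr_deriv ?_
  rw [add_sub_cancel_right, rpow_sub_one hpos.ne']
  field_simp
  ring

theorem hasDerivAt_affineKernelPrimitive_time {γ A B t c : ℝ} (hγ : 0 < γ) (hct : c < t) :
    HasDerivAt (fun t => affineKernelPrimitive γ A B t c)
      (-((A * c + B) * (t - c) ^ (γ - 1)) - A / γ * (t - c) ^ γ) t := by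
  have hpos : 0 < t - c := sub_pos.mpr hct
  have hsub : HasDerivAt (fun t => t - c) 1 t := (hasDerivAt_id t).sub_const c
  have h1 := (hasDerivAt_rpow_const (p := γ) (Or.inl hpos.ne')).comp t hsub
  have h2 := (hasDerivAt_rpow_const (p := γ + 1) (Or.inl hpos.ne')).comp t hsub
  have hlin := (((hasDerivAt_id' t).const_mul A).add_const B).neg
  refine (((hlin.mul h1).div_const γ).add ((h2.const_mul A).div_const (γ + 1))).congr_deriv ?_
  dsimp only [Function.comp_apply, Pi.neg_apply]
  rw [add_sub_cancel_right, rpow_sub_one hpos.ne']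
  field_simp
  ring

theorem intervalIntegrable_mul_sub_rpow_of_affine {γ a b t A B : ℝ} {s : ℝ → ℝ} (hab : a ≤ b)
    (hbt : b < t) (hs : ∀ τ ∈ Icc a b, s τ = A * τ + B) :
    IntervalIntegrable (fun τ => s τ * (t - τ) ^ (γ - 1)) volume a b := by
  refine ContinuousOn.intervalIntegrable ?_
  rw [uIcc_of_le hab]
  refine ContinuousOn.mul ((by fun_prop : Continuous fun τ => A * τ + B).continuousOn.congr hs) ?_
  exact (continuousOn_const.sub continuousOn_id).rpow_const
    fun τ hτ => Or.inl (sub_pos.mpr (hτ.2.trans_lt hbt)).ne'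

theorem hasDerivAt_integral_mul_sub_rpow_of_affine {γ a b t A B : ℝ} {s : ℝ → ℝ} (hγ : 0 < γ)
    (hab : a ≤ b) (hbt : b < t) (hs : ∀ τ ∈ Icc a b, s τ = A * τ + B) :
    HasDerivAt (fun t => ∫ τ in a..b, s τ * (t - τ) ^ (γ - 1))
      (s a * (t - a) ^ (γ - 1) - s b * (t - b) ^ (γ - 1) + A / γ * ((t - a) ^ γ - (t - b) ^ γ))
      t := by
  have hprimitive : ∀ t', b < t' → ∫ τ in a..b, s τ * (t' - τ) ^ (γ - 1)
      = affineKernelPrimitive γ A B t' b - affineKernelPrimitive γ A B t' a := by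
    intro t' ht'
    refine intervalIntegral.integral_eq_sub_of_hasDerivAt (fun τ hτ => ?_)
      (intervalIntegrable_mul_sub_rpow_of_affine hab ht' hs)
    rw [uIcc_of_le hab] at hτ
    rw [hs τ hτ]
    exact hasDerivAt_affineKernelPrimitive_endpoint hγ (hτ.2.trans_lt ht')
  have hderiv := (hasDerivAt_affineKernelPrimitive_time (A := A) (B := B) hγ hbt).sub
    (hasDerivAt_affineKernelPrimitive_time (A := A) (B := B) hγ (hab.trans_lt hbt))
  refine (hderiv.congr_of_eventuallyEq ?_).congr_deriv ?_
  · filter_upwards [Ioi_mem_nhds hbt] with t' ht' using hprimitive t' ht'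
  · rw [hs a ⟨le_rfl, hab⟩, hs b ⟨hab, le_rfl⟩]
    ring

section PiecewiseAffine

variable {γ : ℝ} {s : ℝ → ℝ} {tp : ℕ → ℝ}

theorem intervalIntegrable_mul_sub_rpow_of_piecewise_affine (k : ℕ)
    (hmono : ∀ j < k, tp j < tp (j + 1))
    (hlin : ∀ j < k, ∃ A B : ℝ, ∀ τ ∈ Icc (tp j) (tp (j + 1)), s τ = A * τ + B)
    {t : ℝ} (ht : tp k < t) :
    IntervalIntegrable (fun τ => s τ * (t - τ) ^ (γ - 1)) volume (tp 0) (tp k) := by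
  induction k with
  | zero => exact IntervalIntegrable.refl
  | succ k ih =>
    obtain ⟨A, B, hAB⟩ := hlin k k.lt_succ_self
    have hk := hmono k k.lt_succ_self
    exact (ih (fun j hj => hmono j (hj.trans k.lt_succ_self))
      (fun j hj => hlin j (hj.trans k.lt_succ_self)) (hk.trans ht)).trans
      (intervalIntegrable_mul_sub_rpow_of_affine hk.le ht hAB)

theorem exists_hasDerivAt_integral_mul_sub_rpow_of_piecewise_affine (hγ : 0 < γ) (k : ℕ)
    (hmono : ∀ j < k, tp j < tp (j + 1))
    (hlin : ∀ j < k, ∃ A B : ℝ, ∀ τ ∈ Icc (tp j) (tp (j + 1)), s τ = A * τ + B) :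
    ∃ R : ℝ → ℝ, Continuous R ∧ ∀ t, tp k < t →
      HasDerivAt (fun t => ∫ τ in tp 0..tp k, s τ * (t - τ) ^ (γ - 1))
        (s (tp 0) * (t - tp 0) ^ (γ - 1) - s (tp k) * (t - tp k) ^ (γ - 1) + R t) t := by
  induction k with
  | zero => exact ⟨0, continuous_const, fun t _ => by simpa using hasDerivAt_const t (0 : ℝ)⟩
  | succ k ih =>
    have hmono' : ∀ j < k, tp j < tp (j + 1) := fun j hj => hmono j (hj.trans k.lt_succ_self)
    have hlin' : ∀ j < k, ∃ A B : ℝ, ∀ τ ∈ Icc (tp j) (tp (j + 1)), s τ = A * τ + B :=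
      fun j hj => hlin j (hj.trans k.lt_succ_self)
    obtain ⟨R, hRc, hR⟩ := ih hmono' hlin'
    obtain ⟨A, B, hAB⟩ := hlin k k.lt_succ_self
    have hk := hmono k k.lt_succ_self
    refine ⟨fun t => R t + A / γ * ((t - tp k) ^ γ - (t - tp (k + 1)) ^ γ), ?_, fun t ht => ?_⟩
    · fun_prop (disch := exact hγ.le)
    have hsplit : (fun t => ∫ τ in tp 0..tp (k + 1), s τ * (t - τ) ^ (γ - 1)) =ᶠ[𝓝 t]
        fun t => (∫ τ in tp 0..tp k, s τ * (t - τ) ^ (γ - 1))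
          + ∫ τ in tp k..tp (k + 1), s τ * (t - τ) ^ (γ - 1) := by
      filter_upwards [Ioi_mem_nhds ht] with t' ht'
      exact (intervalIntegral.integral_add_adjacent_intervals
        (intervalIntegrable_mul_sub_rpow_of_piecewise_affine k hmono' hlin' (hk.trans ht'))
        (intervalIntegrable_mul_sub_rpow_of_affine hk.le ht' hAB)).symm
    refine (((hR t (hk.trans ht)).add (hasDerivAt_integral_mul_sub_rpow_of_affine hγ hk.le ht
      hAB)).congr_of_eventuallyEq hsplit).congr_deriv ?_
    ring

end PiecewiseAffine

theorem cz_stress_right_continuous_general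
    (γ t_c : ℝ) (hγ : γ ∈ Set.Ioo (0:ℝ) 1) (htc : 0 < t_c)
    (s : ℝ → ℝ)
    (k : ℕ) (tp : ℕ → ℝ) (htp0 : tp 0 = 0) (htpk : tp k = t_c)
    (htpmono : ∀ j < k, tp j < tp (j + 1))
    (hlin : ∀ j < k, ∃ A B : ℝ, ∀ τ ∈ Set.Icc (tp j) (tp (j + 1)), s τ = A * τ + B)
    (hcz : (∫ τ in (0:ℝ)..t_c, s τ * (t_c - τ) ^ (γ - 1)) = 1 / γ)
    (f : ℝ → ℝ)
    (hf : ∀ t, f t = 1 / γ - ∫ τ in (0:ℝ)..t_c, s τ * (t - τ) ^ (γ - 1))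
    (g : ℝ → ℝ)
    (hg : ∀ τ, t_c < τ →
      g τ = Real.sin (π * γ) / π *
        (f t_c * (τ - t_c) ^ (-γ) + ∫ u in t_c..τ, deriv f u * (τ - u) ^ (-γ))) :
    Filter.Tendsto g (nhdsWithin t_c (Set.Ioi t_c)) (nhds (s t_c)) := by
  obtain ⟨hγ0, hγ1⟩ := hγ
  obtain ⟨R, hRc, hR⟩ :=
    exists_hasDerivAt_integral_mul_sub_rpow_of_piecewise_affine hγ0 k htpmono hlin
  simp only [htp0, htpk, sub_zero] at hR
  have hf_tc : f t_c = 0 := by rw [hf, hcz, sub_self]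
  have hf_deriv : ∀ u ∈ Ioo t_c (t_c + 1),
      deriv f u = s t_c * (u - t_c) ^ (γ - 1) + (-(s 0 * u ^ (γ - 1)) - R u) := by
    intro u hu
    rw [show f = _ from funext hf, ((hR u hu.1).const_sub (1 / γ)).deriv]
    ring
  have hH : ContinuousOn (fun u => -(s 0 * u ^ (γ - 1)) - R u) (Icc t_c (t_c + 1)) :=
    (continuousOn_const.mul (continuousOn_id.rpow_const
      fun u hu => Or.inl (htc.trans_le hu.1).ne')).neg.sub hRc.continuousOn
  refine (tendsto_abel_inversion hγ0 hγ1 (lt_add_one t_c) hH hf_deriv).congr' ?_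
  filter_upwards [self_mem_nhdsWithin] with τ hτ
  rw [hg τ hτ, hf_tc, zero_mul, zero_add]

/-- Right-continuity of the cohesive-zone stress at the time `t_c` a point joins the CZ:
if the stress history `s` on `[0, t_c]` is continuous, piecewise linear on a partition
`0 = t₀ < t₁ < ... < t_k = t_c`, and satisfies `∫₀^{t_c} s(τ)(t_c−τ)^(γ−1) dτ = 1/γ`
(so that `f(t_c) = 0` for `f(t) := 1/γ − ∫₀^{t_c} s(τ)(t−τ)^(γ−1) dτ`), then the
Abel-inverted solution `g` given by the inversion formula tends to `s(t_c)` as `t → t_c⁺`. -/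
theorem cz_stress_right_continuous
    (γ t_c : ℝ) (hγ : γ ∈ Set.Ioo (0:ℝ) 1) (htc : 0 < t_c)
    (s : ℝ → ℝ) (hs : ContinuousOn s (Set.Icc 0 t_c))
    (k : ℕ) (hk : 0 < k) (tp : ℕ → ℝ) (htp0 : tp 0 = 0) (htpk : tp k = t_c)
    (htpmono : ∀ j < k, tp j < tp (j + 1))
    (hlin : ∀ j < k, ∃ A B : ℝ, ∀ τ ∈ Set.Icc (tp j) (tp (j + 1)), s τ = A * τ + B)
    (hcz : (∫ τ in (0:ℝ)..t_c, s τ * (t_c - τ) ^ (γ - 1)) = 1 / γ)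
    (f : ℝ → ℝ)
    (hf : ∀ t, f t = 1 / γ - ∫ τ in (0:ℝ)..t_c, s τ * (t - τ) ^ (γ - 1))
    (g : ℝ → ℝ)
    (hg : ∀ τ, t_c < τ →
      g τ = Real.sin (π * γ) / π *
        (f t_c * (τ - t_c) ^ (-γ) + ∫ u in t_c..τ, deriv f u * (τ - u) ^ (-γ))) :
    Filter.Tendsto g (nhdsWithin t_c (Set.Ioi t_c)) (nhds (s t_c)) :=
  cz_stress_right_continuous_general γ t_c hγ htc s k tp htp0 htpk htpmono hlin hcz f hf g hg
end

section
/- For x > c > a > 0 and continuous σ on [a, c], the stress σ_ahead(x) = (x/√(x²−c²))·(1 − (2/π)∫_a^c √(c²−ξ²)/(x²−ξ²)·σ(ξ) dξ) satisfies lim_{x→c⁺} √(x−c)·σ_ahead(x) = √(c/2)·(1 − (2/π)∫_a^c σ(ξ)/√(c²−ξ²) dξ), provided the latter integral is finite. -/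
open MeasureTheory Set Real Filter Topology Interval

/-! Writing `√(c² − ξ²) / (x² − ξ²) · σ(ξ) = k_x(ξ) · σ(ξ)/√(c² − ξ²)` with
`k_x(ξ) = (c² − ξ²)/(x² − ξ²) ∈ [0, 1]`, and `k_x → 1` a.e. as `x → c⁺`, dominated convergence
against the integrable `|σ|/√(c² − ξ²)` gives the limit of the integral, while
`√(x − c) · x/√(x² − c²) = x/√(x + c) → c/√(2c) = √(c/2)`. -/

-- Holds for every `u`: if `u ≤ 0` both sides vanish, since `√u = 0` and `s / 0 = 0`.
theorem sqrt_div_mul_eq_div_mul_div_sqrt (u v s : ℝ) : √u / v * s = u / v * (s / √u) := by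
  rcases le_or_gt u 0 with hu | hu
  · simp [Real.sqrt_eq_zero'.mpr hu]
  · have hsqrt : √u ≠ 0 := (Real.sqrt_pos.mpr hu).ne'
    field_simp
    rw [Real.sq_sqrt hu.le, mul_comm]

theorem tendsto_sqrt_sub_mul_div_sqrt_sq_sub_sq {c : ℝ} (hc : 0 < c) :
    Tendsto (fun x => √(x - c) * (x / √(x ^ 2 - c ^ 2))) (𝓝[>] c) (𝓝 √(c / 2)) := by
  have hlim : √(c / 2) = c / √(c + c) := by
    rw [show c / 2 = c ^ 2 / (c + c) by field_simp; ring, Real.sqrt_div (by positivity),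
      Real.sqrt_sq hc.le]
  have hcont : Tendsto (fun x => x / √(x + c)) (𝓝[>] c) (𝓝 (c / √(c + c))) :=
    (tendsto_id.div ((continuous_add_const c).sqrt.tendsto c)
      (Real.sqrt_pos.mpr (by linarith)).ne').mono_left nhdsWithin_le_nhds
  rw [hlim]
  refine hcont.congr' ?_
  filter_upwards [self_mem_nhdsWithin] with x (hx : c < x)
  have hsub : 0 < x - c := by linarith
  have hadd : 0 < x + c := by linarith
  have hsplit : √(x ^ 2 - c ^ 2) = √(x - c) * √(x + c) := by
    rw [← Real.sqrt_mul hsub.le]; ring_nf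
  have : √(x - c) ≠ 0 := by positivity
  have : √(x + c) ≠ 0 := by positivity
  rw [hsplit]
  field_simp

theorem tendsto_integral_sq_sub_sq_div_mul {a c : ℝ} (ha : -c ≤ a) (hac : a ≤ c) {g : ℝ → ℝ}
    (hg : IntervalIntegrable g volume a c) :
    Tendsto (fun x => ∫ ξ in a..c, (c ^ 2 - ξ ^ 2) / (x ^ 2 - ξ ^ 2) * g ξ) (𝓝[>] c)
      (𝓝 (∫ ξ in a..c, g ξ)) := by
  have hc : 0 ≤ c := by linarith
  have hmem {ξ : ℝ} (hξ : ξ ∈ Ι a c) : -c < ξ ∧ ξ ≤ c := by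
    rw [uIoc_of_le hac] at hξ
    exact ⟨by linarith [hξ.1], hξ.2⟩
  refine intervalIntegral.tendsto_integral_filter_of_dominated_convergence (fun ξ => |g ξ|)
    (Eventually.of_forall fun x => ?_) ?_ hg.abs ?_
  · exact (by fun_prop : Measurable fun ξ : ℝ => (c ^ 2 - ξ ^ 2) / (x ^ 2 - ξ ^ 2))
      |>.aestronglyMeasurable.mul hg.def'.aestronglyMeasurable
  · filter_upwards [self_mem_nhdsWithin] with x (hx : c < x)
    refine Eventually.of_forall fun ξ hξ => ?_
    obtain ⟨hξl, hξr⟩ := hmem hξ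
    have hnum : 0 ≤ c ^ 2 - ξ ^ 2 := by nlinarith
    have hweight : (c ^ 2 - ξ ^ 2) / (x ^ 2 - ξ ^ 2) ≤ 1 :=
      div_le_one_of_le₀ (by nlinarith) (by nlinarith)
    rw [Real.norm_eq_abs, abs_mul, abs_of_nonneg (div_nonneg hnum (by nlinarith))]
    exact mul_le_of_le_one_left (abs_nonneg _) hweight
  · filter_upwards [volume.ae_ne c] with ξ hξc hξ
    obtain ⟨hξl, hξr⟩ := hmem hξ
    have hpos : 0 < c ^ 2 - ξ ^ 2 := by nlinarith [lt_of_le_of_ne hξr hξc]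
    have hweight : Tendsto (fun x => (c ^ 2 - ξ ^ 2) / (x ^ 2 - ξ ^ 2)) (𝓝 c) (𝓝 1) := by
      rw [← div_self hpos.ne']
      exact tendsto_const_nhds.div ((continuous_pow 2).sub continuous_const).continuousAt hpos.ne'
    simpa using (hweight.mul_const (g ξ)).mono_left nhdsWithin_le_nhds

theorem sif_is_limit_general (a c : ℝ) (ha : 0 < a) (hac : a < c)
    (σ : ℝ → ℝ)
    (hint : IntervalIntegrable (fun ξ => σ ξ / Real.sqrt (c ^ 2 - ξ ^ 2)) volume a c) :
    Filter.Tendsto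
      (fun x => Real.sqrt (x - c) *
        (x / Real.sqrt (x ^ 2 - c ^ 2) *
          (1 - (2 / π) * ∫ ξ in a..c,
            Real.sqrt (c ^ 2 - ξ ^ 2) / (x ^ 2 - ξ ^ 2) * σ ξ)))
      (nhdsWithin c (Set.Ioi c))
      (nhds (Real.sqrt (c / 2) *
        (1 - (2 / π) * ∫ ξ in a..c, σ ξ / Real.sqrt (c ^ 2 - ξ ^ 2)))) := by
  have hintegral := tendsto_integral_sq_sub_sq_div_mul (by linarith) hac.le hint
  simp only [← sqrt_div_mul_eq_div_mul_div_sqrt] at hintegral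
  exact ((tendsto_sqrt_sub_mul_div_sqrt_sq_sub_sq (ha.trans hac)).mul
    (tendsto_const_nhds.sub (hintegral.const_mul (2 / π)))).congr fun x => by ring

/-- Identification of the stress intensity factor: for the Muskhelishvili stress ahead of
the cohesive zone tip `c`, `√(x−c)·σ_ahead(x)` tends, as `x → c⁺`, to
`√(c/2)·(1 − (2/π)∫_a^c σ(ξ)/√(c²−ξ²) dξ)`, provided the latter integral is finite. -/
theorem sif_is_limit (a c : ℝ) (ha : 0 < a) (hac : a < c)
    (σ : ℝ → ℝ) (hσ : ContinuousOn σ (Set.Icc a c))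
    (hint : IntervalIntegrable (fun ξ => σ ξ / Real.sqrt (c ^ 2 - ξ ^ 2)) volume a c) :
    Filter.Tendsto
      (fun x => Real.sqrt (x - c) *
        (x / Real.sqrt (x ^ 2 - c ^ 2) *
          (1 - (2 / π) * ∫ ξ in a..c,
            Real.sqrt (c ^ 2 - ξ ^ 2) / (x ^ 2 - ξ ^ 2) * σ ξ)))
      (nhdsWithin c (Set.Ioi c))
      (nhds (Real.sqrt (c / 2) *
        (1 - (2 / π) * ∫ ξ in a..c, σ ξ / Real.sqrt (c ^ 2 - ξ ^ 2)))) :=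
  sif_is_limit_general a c ha hac σ hint
end

section
/- Under the zero stress intensity factor condition ∫_a^c σ(ξ)/√(c²−ξ²) dξ = π/2 with σ continuous on [a,c], the stress ahead of the cohesive zone σ_ahead(x) = (2x/π)·√(x²−c²)·∫_a^c σ(ξ)/((x²−ξ²)√(c²−ξ²)) dξ is bounded as x → c⁺, with limit σ(c). -/
open MeasureTheory Set Real Filter

open scoped Topology

/-!
The kernel `k_x(ξ) = (2x/π) √(x² - c²) / ((x² - ξ²) √(c² - ξ²))` is nonnegative on `[a, c]` and
has the explicit primitive `-(2/π) arctan (x √(c² - ξ²) / (ξ √(x² - c²)))`. As `x → c⁺` the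
argument of the arctangent tends to `+∞` for every `ξ < c` and is `0` at `ξ = c`, so the mass of
`k_x` on `[a, c]` tends to `1` while its mass on every `[a, b]` with `b < c` tends to `0`: the
kernels form an approximate identity at `c`. Hence `σ_ahead(x) = ∫ σ k_x → σ(c)` by continuity of
`σ` at `c`.
-/

lemma abs_integral_mul_le_of_abs_le {g k : ℝ → ℝ} {a b M : ℝ} (hab : a ≤ b)
    (hk : IntervalIntegrable k volume a b) (hk0 : ∀ ξ ∈ Icc a b, 0 ≤ k ξ)
    (hM : ∀ ξ ∈ Icc a b, |g ξ| ≤ M) :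
    |∫ ξ in a..b, g ξ * k ξ| ≤ M * ∫ ξ in a..b, k ξ := by
  rw [← intervalIntegral.integral_const_mul M k, ← Real.norm_eq_abs]
  refine intervalIntegral.norm_integral_le_of_norm_le hab (ae_of_all _ fun ξ hξ => ?_)
    (hk.const_mul M)
  have hξ' := Ioc_subset_Icc_self hξ
  rw [norm_mul, Real.norm_eq_abs, Real.norm_eq_abs, abs_of_nonneg (hk0 ξ hξ')]
  exact mul_le_mul_of_nonneg_right (hM ξ hξ') (hk0 ξ hξ')

lemma abs_integral_mul_le_add {g k : ℝ → ℝ} {a b c M ε : ℝ} (hab : a ≤ b) (hbc : b ≤ c)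
    (hg : ContinuousOn g (Icc a c)) (hk : IntervalIntegrable k volume a c)
    (hk0 : ∀ ξ ∈ Icc a c, 0 ≤ k ξ) (hM : ∀ ξ ∈ Icc a b, |g ξ| ≤ M)
    (hε : ∀ ξ ∈ Icc b c, |g ξ| ≤ ε) :
    |∫ ξ in a..c, g ξ * k ξ| ≤ M * (∫ ξ in a..b, k ξ) + ε * ∫ ξ in b..c, k ξ := by
  have hac := hab.trans hbc
  have hsub_ab : uIcc a b ⊆ uIcc a c := by
    rw [uIcc_of_le hab, uIcc_of_le hac]; exact Icc_subset_Icc_right hbc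
  have hsub_bc : uIcc b c ⊆ uIcc a c := by
    rw [uIcc_of_le hbc, uIcc_of_le hac]; exact Icc_subset_Icc_left hab
  have hgk : IntervalIntegrable (fun ξ => g ξ * k ξ) volume a c :=
    hk.continuousOn_mul (by rwa [uIcc_of_le hac])
  rw [← intervalIntegral.integral_add_adjacent_intervals (hgk.mono_set hsub_ab)
    (hgk.mono_set hsub_bc)]
  refine (abs_add_le _ _).trans (add_le_add ?_ ?_)
  · exact abs_integral_mul_le_of_abs_le hab (hk.mono_set hsub_ab)
      (fun ξ hξ => hk0 ξ (Icc_subset_Icc_right hbc hξ)) hM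
  · exact abs_integral_mul_le_of_abs_le hbc (hk.mono_set hsub_bc)
      (fun ξ hξ => hk0 ξ (Icc_subset_Icc_left hab hξ)) hε

section Concentration

variable {ι : Type*} {l : Filter ι} {a c : ℝ} {k : ι → ℝ → ℝ}

lemma exists_abs_le_on_Icc_of_continuousWithinAt {g : ℝ → ℝ} (hac : a < c)
    (hg : ContinuousWithinAt g (Icc a c) c) (hgc : g c = 0) {ε : ℝ} (hε : 0 < ε) :
    ∃ b ∈ Ico a c, ∀ ξ ∈ Icc b c, |g ξ| ≤ ε := by
  have hev : ∀ᶠ ξ in 𝓝[Icc a c] c, |g ξ| ≤ ε := by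
    filter_upwards [hg.tendsto.eventually (Metric.closedBall_mem_nhds (g c) hε)] with ξ hξ
    simpa [hgc, Real.dist_eq] using hξ
  rw [nhdsWithin_Icc_eq_nhdsLE hac] at hev
  obtain ⟨b, hbc, hb⟩ := mem_nhdsLE_iff_exists_Icc_subset.1 hev
  exact ⟨max a b, ⟨le_max_left _ _, max_lt hac hbc⟩,
    fun ξ hξ => hb ⟨(le_max_right _ _).trans hξ.1, hξ.2⟩⟩

lemma tendsto_integral_mul_of_concentrating_of_eq_zero {g : ℝ → ℝ} (hac : a < c)
    (hg : ContinuousOn g (Icc a c)) (hgc : g c = 0)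
    (hk : ∀ᶠ i in l, IntervalIntegrable (k i) volume a c)
    (hk0 : ∀ᶠ i in l, ∀ ξ ∈ Icc a c, 0 ≤ k i ξ)
    (hmass : Tendsto (fun i => ∫ ξ in a..c, k i ξ) l (𝓝 1))
    (hconc : ∀ b ∈ Ico a c, Tendsto (fun i => ∫ ξ in a..b, k i ξ) l (𝓝 0)) :
    Tendsto (fun i => ∫ ξ in a..c, g ξ * k i ξ) l (𝓝 0) := by
  obtain ⟨M, hM⟩ := isCompact_Icc.exists_bound_of_continuousOn hg
  rw [Metric.tendsto_nhds]
  intro ε hε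
  obtain ⟨b, ⟨hab, hbc⟩, hb⟩ :=
    exists_abs_le_on_Icc_of_continuousWithinAt hac (hg c ⟨hac.le, le_rfl⟩) hgc (half_pos hε)
  have htail : Tendsto (fun i => ∫ ξ in b..c, k i ξ) l (𝓝 1) := by
    have := hmass.sub (hconc b ⟨hab, hbc⟩)
    rw [sub_zero] at this
    refine this.congr' ?_
    filter_upwards [hk] with i hi
    exact intervalIntegral.integral_interval_sub_left hi (hi.mono_set (by
      rw [uIcc_of_le hab, uIcc_of_le hac.le]; exact Icc_subset_Icc_right hbc.le))
  have hbound : Tendsto (fun i => M * (∫ ξ in a..b, k i ξ) + ε / 2 * ∫ ξ in b..c, k i ξ) l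
      (𝓝 (M * 0 + ε / 2 * 1)) :=
    ((hconc b ⟨hab, hbc⟩).const_mul M).add (htail.const_mul _)
  filter_upwards [hk, hk0, hbound.eventually (gt_mem_nhds (by linarith : M * 0 + ε / 2 * 1 < ε))]
    with i hi hi0 hlt
  rw [Real.dist_eq, sub_zero]
  have hMb : ∀ ξ ∈ Icc a b, |g ξ| ≤ M :=
    fun ξ hξ => hM ξ (Icc_subset_Icc_right hbc.le hξ)
  exact (abs_integral_mul_le_add hab hbc.le hg hi hi0 hMb hb).trans_lt hlt

theorem tendsto_integral_mul_of_concentrating {f : ℝ → ℝ} (hac : a < c)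
    (hf : ContinuousOn f (Icc a c))
    (hk : ∀ᶠ i in l, IntervalIntegrable (k i) volume a c)
    (hk0 : ∀ᶠ i in l, ∀ ξ ∈ Icc a c, 0 ≤ k i ξ)
    (hmass : Tendsto (fun i => ∫ ξ in a..c, k i ξ) l (𝓝 1))
    (hconc : ∀ b ∈ Ico a c, Tendsto (fun i => ∫ ξ in a..b, k i ξ) l (𝓝 0)) :
    Tendsto (fun i => ∫ ξ in a..c, f ξ * k i ξ) l (𝓝 (f c)) := by
  have hrem := tendsto_integral_mul_of_concentrating_of_eq_zero (g := fun ξ => f ξ - f c) hac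
    (hf.sub continuousOn_const) (sub_self (f c)) hk hk0 hmass hconc
  have := (hmass.const_mul (f c)).add hrem
  rw [mul_one, add_zero] at this
  refine this.congr' ?_
  filter_upwards [hk] with i hi
  have hfk : IntervalIntegrable (fun ξ => (f ξ - f c) * k i ξ) volume a c :=
    hi.continuousOn_mul (by rw [uIcc_of_le hac.le]; exact hf.sub continuousOn_const)
  rw [← intervalIntegral.integral_const_mul,
    ← intervalIntegral.integral_add (hi.const_mul _) hfk]
  congr 1 with ξ
  ring

end Concentration

noncomputable def stressKernel (c x ξ : ℝ) : ℝ :=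
  2 * x / π * √(x ^ 2 - c ^ 2) / ((x ^ 2 - ξ ^ 2) * √(c ^ 2 - ξ ^ 2))

noncomputable def stressKernelPrimitive (c x ξ : ℝ) : ℝ :=
  -(2 / π) * arctan (x * √(c ^ 2 - ξ ^ 2) / (ξ * √(x ^ 2 - c ^ 2)))

section Kernel

variable {c x ξ : ℝ}

lemma stressKernel_nonneg (hc : 0 ≤ c) (hcx : c < x) : 0 ≤ stressKernel c x ξ := by
  rcases le_or_gt (c ^ 2 - ξ ^ 2) 0 with h | h
  · rw [stressKernel, Real.sqrt_eq_zero_of_nonpos h, mul_zero, div_zero]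
  · have : 0 < x ^ 2 - ξ ^ 2 := by nlinarith
    have : 0 < x := hc.trans_lt hcx
    have := pi_pos
    unfold stressKernel
    positivity

@[simp]
lemma stressKernelPrimitive_self : stressKernelPrimitive c x c = 0 := by
  simp [stressKernelPrimitive]

lemma continuousOn_stressKernelPrimitive (hc : 0 ≤ c) (hcx : c < x) :
    ContinuousOn (stressKernelPrimitive c x) (Ioi 0) := by
  have hs : 0 < √(x ^ 2 - c ^ 2) := Real.sqrt_pos.2 (by nlinarith)
  exact continuousOn_const.mul (continuous_arctan.comp_continuousOn
    (ContinuousOn.div (by fun_prop) (by fun_prop) fun ξ hξ => (mul_pos hξ hs).ne'))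

lemma hasDerivAt_stressKernelPrimitive (hξ : 0 < ξ) (hξc : ξ < c) (hcx : c < x) :
    HasDerivAt (stressKernelPrimitive c x) (stressKernel c x ξ) ξ := by
  have hc : 0 < c := hξ.trans hξc
  have hx : 0 < x := hc.trans hcx
  have hs2 : 0 < x ^ 2 - c ^ 2 := by nlinarith
  have hw2 : 0 < c ^ 2 - ξ ^ 2 := by nlinarith
  have hxξ : 0 < x ^ 2 - ξ ^ 2 := by nlinarith
  set s := √(x ^ 2 - c ^ 2) with hs_def
  set w := √(c ^ 2 - ξ ^ 2)
  have hs : 0 < s := Real.sqrt_pos.2 hs2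
  have hw : 0 < w := Real.sqrt_pos.2 hw2
  have hssq : s ^ 2 = x ^ 2 - c ^ 2 := Real.sq_sqrt hs2.le
  have hwsq : w ^ 2 = c ^ 2 - ξ ^ 2 := Real.sq_sqrt hw2.le
  have hw_deriv : HasDerivAt (fun t => √(c ^ 2 - t ^ 2)) (-ξ / w) ξ := by
    have := ((hasDerivAt_pow 2 ξ).const_sub (c ^ 2)).sqrt hw2.ne'
    convert this using 1
    field_simp
    ring
  have hG : HasDerivAt (fun t => arctan (x * √(c ^ 2 - t ^ 2) / (t * s)))
      (1 / (1 + (x * w / (ξ * s)) ^ 2) *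
        ((x * (-ξ / w) * (ξ * s) - x * w * (1 * s)) / (ξ * s) ^ 2)) ξ :=
    ((hw_deriv.const_mul x).div ((hasDerivAt_id' ξ).mul_const s) (mul_pos hξ hs).ne').arctan
  refine (hG.const_mul (-(2 / π))).congr_deriv ?_
  have hG_sq : 1 + (x * w / (ξ * s)) ^ 2 = c ^ 2 * (x ^ 2 - ξ ^ 2) / (ξ ^ 2 * s ^ 2) := by
    rw [div_pow, mul_pow, mul_pow, hssq, hwsq]
    field_simp
    ring
  rw [hG_sq, stressKernel, ← hs_def]
  field_simp
  linear_combination w * hwsq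

lemma tendsto_stressKernelPrimitive (hξ : 0 < ξ) (hξc : ξ < c) :
    Tendsto (fun x => stressKernelPrimitive c x ξ) (𝓝[>] c) (𝓝 (-1)) := by
  have hc : 0 < c := hξ.trans hξc
  have hw : 0 < √(c ^ 2 - ξ ^ 2) := Real.sqrt_pos.2 (by nlinarith)
  have hs : Tendsto (fun x => √(x ^ 2 - c ^ 2)) (𝓝[>] c) (𝓝[>] 0) := by
    refine tendsto_nhdsWithin_iff.2 ⟨?_, ?_⟩
    · have : Continuous fun x : ℝ => √(x ^ 2 - c ^ 2) := by fun_prop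
      simpa using this.continuousWithinAt.tendsto (x := c) (s := Ioi c)
    · filter_upwards [self_mem_nhdsWithin] with x (hx : c < x)
      exact Real.sqrt_pos.2 (by nlinarith)
  have hnum : Tendsto (fun x => x * √(c ^ 2 - ξ ^ 2) / ξ) (𝓝[>] c)
      (𝓝 (c * √(c ^ 2 - ξ ^ 2) / ξ)) :=
    (Continuous.tendsto (by fun_prop) c).mono_left nhdsWithin_le_nhds
  have hG : Tendsto (fun x => x * √(c ^ 2 - ξ ^ 2) / ξ * (√(x ^ 2 - c ^ 2))⁻¹) (𝓝[>] c) atTop :=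
    hnum.pos_mul_atTop (by positivity) (tendsto_inv_nhdsGT_zero.comp hs)
  have := ((tendsto_arctan_atTop.mono_right nhdsWithin_le_nhds).comp hG).const_mul (-(2 / π))
  convert this using 2 with x
  · simp only [stressKernelPrimitive, Function.comp]
    congr 2
    field_simp
  · field_simp

variable {a b : ℝ}

lemma intervalIntegrable_stressKernel (ha : 0 < a) (hab : a ≤ b) (hbc : b ≤ c) (hcx : c < x) :
    IntervalIntegrable (stressKernel c x) volume a b := by
  have hc : 0 < c := (ha.trans_le hab).trans_le hbc
  refine intervalIntegral.intervalIntegrable_deriv_of_nonneg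
    (g := stressKernelPrimitive c x) ?_ ?_ fun ξ _ => stressKernel_nonneg hc.le hcx
  · rw [uIcc_of_le hab]
    exact (continuousOn_stressKernelPrimitive hc.le hcx).mono fun ξ hξ => ha.trans_le hξ.1
  · rw [min_eq_left hab, max_eq_right hab]
    exact fun ξ hξ => hasDerivAt_stressKernelPrimitive (ha.trans hξ.1) (hξ.2.trans_le hbc) hcx

lemma integral_stressKernel (ha : 0 < a) (hab : a ≤ b) (hbc : b ≤ c) (hcx : c < x) :
    ∫ ξ in a..b, stressKernel c x ξ =
      stressKernelPrimitive c x b - stressKernelPrimitive c x a :=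
  intervalIntegral.integral_eq_sub_of_hasDerivAt_of_le hab
    ((continuousOn_stressKernelPrimitive (ha.le.trans (hab.trans hbc)) hcx).mono
      fun _ hξ => ha.trans_le hξ.1)
    (fun _ hξ => hasDerivAt_stressKernelPrimitive (ha.trans hξ.1) (hξ.2.trans_le hbc) hcx)
    (intervalIntegrable_stressKernel ha hab hbc hcx)

lemma tendsto_integral_stressKernel (ha : 0 < a) (hac : a < c) :
    Tendsto (fun x => ∫ ξ in a..c, stressKernel c x ξ) (𝓝[>] c) (𝓝 1) := by
  have := (tendsto_stressKernelPrimitive ha hac).const_sub 0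
  rw [sub_neg_eq_add, zero_add] at this
  refine this.congr' ?_
  filter_upwards [self_mem_nhdsWithin] with x (hx : c < x)
  rw [integral_stressKernel ha hac.le le_rfl hx, stressKernelPrimitive_self]

lemma tendsto_integral_stressKernel_of_lt (ha : 0 < a) (hab : a ≤ b) (hbc : b < c) :
    Tendsto (fun x => ∫ ξ in a..b, stressKernel c x ξ) (𝓝[>] c) (𝓝 0) := by
  have := (tendsto_stressKernelPrimitive (ha.trans_le hab) hbc).sub
    (tendsto_stressKernelPrimitive ha (hab.trans_lt hbc))
  rw [sub_self] at this
  refine this.congr' ?_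
  filter_upwards [self_mem_nhdsWithin] with x (hx : c < x)
  rw [integral_stressKernel ha hab hbc.le hx]

end Kernel

theorem stress_ahead_tendsto_general (a c : ℝ) (ha : 0 < a) (hac : a < c)
    (σ : ℝ → ℝ) (hσ : ContinuousOn σ (Set.Icc a c)) :
    Filter.Tendsto
      (fun x => (2 * x / π) * Real.sqrt (x ^ 2 - c ^ 2) *
        ∫ ξ in a..c, σ ξ / ((x ^ 2 - ξ ^ 2) * Real.sqrt (c ^ 2 - ξ ^ 2)))
      (nhdsWithin c (Set.Ioi c)) (nhds (σ c)) := by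
  have hc : 0 < c := ha.trans hac
  have hlim := tendsto_integral_mul_of_concentrating (l := 𝓝[>] c) (k := stressKernel c) hac hσ
    (eventually_nhdsWithin_of_forall fun _ hx =>
      intervalIntegrable_stressKernel ha hac.le le_rfl hx)
    (eventually_nhdsWithin_of_forall fun _ hx _ _ => stressKernel_nonneg hc.le hx)
    (tendsto_integral_stressKernel ha hac)
    (fun b hb => tendsto_integral_stressKernel_of_lt ha hb.1 hb.2)
  refine hlim.congr fun x => ?_
  rw [← intervalIntegral.integral_const_mul]
  congr 1 with ξ
  rw [stressKernel]
  ring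

/-- Under the zero stress intensity factor condition
`∫_a^c σ(ξ)/√(c²−ξ²) dξ = π/2` with `σ` continuous on `[a, c]`, the reduced
Muskhelishvili stress ahead of the cohesive zone tip,
`σ_ahead(x) = (2x/π)·√(x²−c²)·∫_a^c σ(ξ)/((x²−ξ²)√(c²−ξ²)) dξ`,
tends to `σ(c)` as `x → c⁺` (in particular it is bounded near `c`). -/
theorem stress_ahead_tendsto (a c : ℝ) (ha : 0 < a) (hac : a < c)
    (σ : ℝ → ℝ) (hσ : ContinuousOn σ (Set.Icc a c))
    (hK : (∫ ξ in a..c, σ ξ / Real.sqrt (c ^ 2 - ξ ^ 2)) = π / 2) :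
    Filter.Tendsto
      (fun x => (2 * x / π) * Real.sqrt (x ^ 2 - c ^ 2) *
        ∫ ξ in a..c, σ ξ / ((x ^ 2 - ξ ^ 2) * Real.sqrt (c ^ 2 - ξ ^ 2)))
      (nhdsWithin c (Set.Ioi c)) (nhds (σ c)) :=
  stress_ahead_tendsto_general a c ha hac σ hσ
end
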